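/- arXiv:1611.01861 — 5 statements merged into one kernel-verified Lean document; each statement's English description precedes it below -/
import Mathlib

section
/- Let f₁,…,f_r be degree-one polynomials on an M-dimensional vector space W, a₁,…,a_r complex numbers, and for linear forms F₁,…,F_M on W set h_j(x,y) = F_j(x) − F_j(y) on W × W. For 0 ≤ b ≤ M define S^{(b)} = Σ_{1≤i₁<…<i_b≤r} Π_{s=1}^b a_{i_s} dlog f_{i_s}^{(1)} ∧ dlog f_{i_s}^{(2)}, and for q₁<…<q_w with w+b=M set S_{q₁…q_w} = S^{(b)} ∧ Π_{j=1}^w dlog(F_{q_j}^{(1)} − F_{q_j}^{(2)}). Then for every 1 ≤ k ≤ M, Σ_{j=1}^{k} (−1)^{j+1} S_{q₁,…,q̂_j,…,q_k} = (η^{(1)} − η^{(2)}) ∧ S_{q₁…q_k}, where η = Σ_i a_i dlog f_i. -/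
set_option synthInstance.maxHeartbeats 1000000
set_option maxHeartbeats 1000000

noncomputable section

open ExteriorAlgebra

/-- Points of `W × W`, where `W = ℂ^M`. -/
abbrev Pt (M : ℕ) := (Fin M → ℂ) × (Fin M → ℂ)

/-- The dual space of `W × W`; constant-coefficient 1-forms live here. -/
abbrev Cov (M : ℕ) := Pt M →ₗ[ℂ] ℂ

/-- Algebraic differential forms on (an open subset of) `W × W`, described by their
value at each point as an element of the exterior algebra of the dual space. -/
abbrev Forms (M : ℕ) := ExteriorAlgebra ℂ (Cov M)

variable (M r : ℕ)

/-- `dlog f_i^{(1)}` at the point `p`, where `f_i` is the degree one polynomial with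
linear part `ℓ i` and constant term `c i`, pulled back via the first projection. -/
def dlog1 (ℓ : Fin r → ((Fin M → ℂ) →ₗ[ℂ] ℂ)) (c : Fin r → ℂ) (i : Fin r)
    (p : Pt M) : Forms M :=
  (ℓ i p.1 + c i)⁻¹ • ι ℂ ((ℓ i).comp (LinearMap.fst ℂ (Fin M → ℂ) (Fin M → ℂ)))

/-- `dlog f_i^{(2)}` at the point `p` (pullback via the second projection). -/
def dlog2 (ℓ : Fin r → ((Fin M → ℂ) →ₗ[ℂ] ℂ)) (c : Fin r → ℂ) (i : Fin r)
    (p : Pt M) : Forms M :=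
  (ℓ i p.2 + c i)⁻¹ • ι ℂ ((ℓ i).comp (LinearMap.snd ℂ (Fin M → ℂ) (Fin M → ℂ)))

/-- `dlog (F_q^{(1)} − F_q^{(2)})` at the point `p`, for linear forms `F q` on `W`. -/
def dlogH (F : Fin M → ((Fin M → ℂ) →ₗ[ℂ] ℂ)) (q : Fin M) (p : Pt M) : Forms M :=
  (F q p.1 - F q p.2)⁻¹ •
    ι ℂ ((F q).comp (LinearMap.fst ℂ (Fin M → ℂ) (Fin M → ℂ))
          - (F q).comp (LinearMap.snd ℂ (Fin M → ℂ) (Fin M → ℂ)))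

/-- `S^{(b)} = Σ_{i₁<…<i_b} Π_s a_{i_s} dlog f_{i_s}^{(1)} ∧ dlog f_{i_s}^{(2)}`
at the point `p`. -/
def Sb (ℓ : Fin r → ((Fin M → ℂ) →ₗ[ℂ] ℂ)) (c : Fin r → ℂ) (a : Fin r → ℂ)
    (b : ℕ) (p : Pt M) : Forms M :=
  ∑ s ∈ Finset.powersetCard b (Finset.univ : Finset (Fin r)),
    (∏ i ∈ s, a i) •
      ((s.sort (· ≤ ·)).map (fun i => dlog1 M r ℓ c i p * dlog2 M r ℓ c i p)).prod

/-- `η^{(1)} = Σ_i a_i dlog f_i^{(1)}` at the point `p`. -/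
def eta1 (ℓ : Fin r → ((Fin M → ℂ) →ₗ[ℂ] ℂ)) (c : Fin r → ℂ) (a : Fin r → ℂ)
    (p : Pt M) : Forms M :=
  ∑ i : Fin r, a i • dlog1 M r ℓ c i p

/-- `η^{(2)} = Σ_i a_i dlog f_i^{(2)}` at the point `p`. -/
def eta2 (ℓ : Fin r → ((Fin M → ℂ) →ₗ[ℂ] ℂ)) (c : Fin r → ℂ) (a : Fin r → ℂ)
    (p : Pt M) : Forms M :=
  ∑ i : Fin r, a i • dlog2 M r ℓ c i p

/-- `S_{q₁…q_w} = S^{(M−w)} ∧ Π_j dlog(F_{q_j}^{(1)} − F_{q_j}^{(2)})` at `p`. -/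
def Sflag (ℓ : Fin r → ((Fin M → ℂ) →ₗ[ℂ] ℂ)) (c : Fin r → ℂ) (a : Fin r → ℂ)
    (F : Fin M → ((Fin M → ℂ) →ₗ[ℂ] ℂ)) (w : ℕ) (q : Fin w → Fin M)
    (p : Pt M) : Forms M :=
  Sb M r ℓ c a (M - w) p * (List.ofFn fun j => dlogH M F (q j) p).prod

namespace AomotoAux

variable {V : Type*} [AddCommGroup V] [Module ℂ V]

lemma swap_ii (x y : V) : ι ℂ x * ι ℂ y = -(ι ℂ y * ι ℂ x) :=
  eq_neg_of_add_eq_zero_left (ExteriorAlgebra.ι_add_mul_swap x y)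

lemma anticomm_list (x : V) (l : List V) :
    ι ℂ x * (l.map (ι ℂ)).prod = ((-1:ℂ)^l.length) • ((l.map (ι ℂ)).prod * ι ℂ x) := by
  induction l with
  | nil => simp
  | cons y l ih =>
    simp only [List.map_cons, List.prod_cons, List.length_cons]
    rw [← mul_assoc, swap_ii, neg_mul, mul_assoc, ih]
    rw [mul_smul_comm, ← mul_assoc]
    rw [pow_succ, ← neg_smul, mul_assoc]
    congr 1
    ring

lemma dep_zero {n : ℕ} (v : Fin n → V) (h : ¬ LinearIndependent ℂ v) :
    (List.ofFn fun i => ι ℂ (v i)).prod = 0 := by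
  rw [← ExteriorAlgebra.ιMulti_apply]
  exact AlternatingMap.map_linearDependent _ _ h

lemma ι_comm_even (x a b : V) : ι ℂ x * (ι ℂ a * ι ℂ b) = (ι ℂ a * ι ℂ b) * ι ℂ x := by
  rw [← mul_assoc, swap_ii x a, neg_mul, mul_assoc, swap_ii x b, mul_neg, neg_neg, mul_assoc]

lemma even_comm_even (a b a' b' : V) : Commute (ι ℂ a * ι ℂ b) (ι ℂ a' * ι ℂ b') := by
  unfold Commute SemiconjBy
  rw [mul_assoc, ι_comm_even b a' b', ← mul_assoc, ι_comm_even a a' b', mul_assoc]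

lemma contract_even (ξ : Module.Dual ℂ V) (x y : V) :
    CliffordAlgebra.contractLeft ξ (ι ℂ x * ι ℂ y) = ξ x • ι ℂ y - ξ y • ι ℂ x := by
  rw [CliffordAlgebra.contractLeft_ι_mul, CliffordAlgebra.contractLeft_ι,
    Algebra.algebraMap_eq_smul_one, mul_smul_comm, mul_one]

lemma Leib2 (ξ : Module.Dual ℂ V) (x y : V) (z : ExteriorAlgebra ℂ V) :
    CliffordAlgebra.contractLeft ξ (ι ℂ x * ι ℂ y * z)
      = CliffordAlgebra.contractLeft ξ (ι ℂ x * ι ℂ y) * z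
        + (ι ℂ x * ι ℂ y) * CliffordAlgebra.contractLeft ξ z := by
  rw [contract_even, mul_assoc, CliffordAlgebra.contractLeft_ι_mul,
    CliffordAlgebra.contractLeft_ι_mul]
  simp only [mul_sub, sub_mul, smul_mul_assoc, mul_smul_comm, mul_assoc]
  abel

lemma contract_gamma (ξ : Module.Dual ℂ V) (n : ℕ) (G : Fin (n+1) → V) :
    CliffordAlgebra.contractLeft ξ (List.ofFn fun t => ι ℂ (G t)).prod
      = ∑ t : Fin (n+1), ((-1:ℂ)^(t:ℕ) * ξ (G t)) •
          (List.ofFn fun s : Fin n => ι ℂ (G (t.succAbove s))).prod := by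
  induction n with
  | zero =>
    simp [List.ofFn_succ, CliffordAlgebra.contractLeft_ι_mul,
      CliffordAlgebra.contractLeft_one, Algebra.algebraMap_eq_smul_one]
  | succ n ih =>
    have hL : (List.ofFn fun t : Fin (n+2) => ι ℂ (G t)).prod
        = ι ℂ (G 0) * (List.ofFn fun t : Fin (n+1) => ι ℂ (G t.succ)).prod := by
      rw [List.ofFn_succ, List.prod_cons]
    rw [hL, CliffordAlgebra.contractLeft_ι_mul, ih (fun s => G s.succ), Finset.mul_sum,
      Fin.sum_univ_succ (f := fun t : Fin (n+2) => ((-1:ℂ)^(t:ℕ) * ξ (G t)) •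
        (List.ofFn fun s : Fin (n+1) => ι ℂ (G (t.succAbove s))).prod),
      sub_eq_add_neg]
    congr 1
    · simp [Fin.zero_succAbove]
    · rw [← Finset.sum_neg_distrib]
      refine Finset.sum_congr rfl fun t _ => ?_
      simp only [List.ofFn_succ, Fin.succ_succAbove_zero, Fin.succ_succAbove_succ,
        List.prod_cons]
      rw [mul_smul_comm, Fin.val_succ, pow_succ, ← neg_smul]
      congr 1
      ring

/-- The antidiagonal embedding of the dual of `W` into `Cov M`. -/
def Dl (M : ℕ) : ((Fin M → ℂ) →ₗ[ℂ] ℂ) →ₗ[ℂ] Cov M where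
  toFun μ := μ ∘ₗ LinearMap.fst ℂ (Fin M → ℂ) (Fin M → ℂ)
      - μ ∘ₗ LinearMap.snd ℂ (Fin M → ℂ) (Fin M → ℂ)
  map_add' f g := by simp only [LinearMap.add_comp]; abel
  map_smul' t f := by simp only [LinearMap.smul_comp, RingHom.id_apply, smul_sub]

lemma finrank_W' (M : ℕ) : Module.finrank ℂ ((Fin M → ℂ) →ₗ[ℂ] ℂ) = M := by
  rw [Module.finrank_linearMap_self]
  simp

lemma zero_of_many {M : ℕ} (exl : List ((Fin M → ℂ) →ₗ[ℂ] ℂ)) (hlen : M < exl.length) :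
    ((exl.map (fun μ => ι ℂ (Dl M μ))).prod : Forms M) = 0 := by
  rw [← List.ofFn_getElem_eq_map]
  apply dep_zero
  intro hLI
  have h2 : LinearIndependent ℂ (fun i : Fin exl.length => exl[(i : ℕ)]) :=
    LinearIndependent.of_comp (Dl M) hLI
  have h3 := h2.fintype_card_le_finrank
  rw [finrank_W', Fintype.card_fin] at h3
  omega

end AomotoAux
namespace AomotoAux

section Main
variable (M r : ℕ) (ℓ : Fin r → ((Fin M → ℂ) →ₗ[ℂ] ℂ)) (c : Fin r → ℂ) (p : Pt M)

/-- The 2-form factor `dlog f_i^{(1)} ∧ dlog f_i^{(2)}` at `p`. -/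
def ww (i : Fin r) : Forms M := dlog1 M r ℓ c i p * dlog2 M r ℓ c i p

def Avec (i : Fin r) : Cov M :=
  (ℓ i p.1 + c i)⁻¹ • ((ℓ i).comp (LinearMap.fst ℂ (Fin M → ℂ) (Fin M → ℂ)))
def Bvec (i : Fin r) : Cov M :=
  (ℓ i p.2 + c i)⁻¹ • ((ℓ i).comp (LinearMap.snd ℂ (Fin M → ℂ) (Fin M → ℂ)))

lemma dlog1_eq (i : Fin r) : dlog1 M r ℓ c i p = ι ℂ (Avec M r ℓ c p i) := by
  rw [Avec, dlog1, map_smul]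

lemma dlog2_eq (i : Fin r) : dlog2 M r ℓ c i p = ι ℂ (Bvec M r ℓ c p i) := by
  rw [Bvec, dlog2, map_smul]

lemma ww_eq (i : Fin r) :
    ww M r ℓ c p i = ι ℂ (Avec M r ℓ c p i) * ι ℂ (Bvec M r ℓ c p i) := by
  rw [ww, dlog1_eq, dlog2_eq]

lemma ww_comm (i j : Fin r) : Commute (ww M r ℓ c p i) (ww M r ℓ c p j) := by
  rw [ww_eq, ww_eq]; exact even_comm_even _ _ _ _

/-- Product of the 2-forms over a finite set of indices. -/
def NP (s : Finset (Fin r)) : Forms M :=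
  s.noncommProd (ww M r ℓ c p) (fun i _ j _ _ => ww_comm M r ℓ c p i j)

lemma sortProd_eq_NP (s : Finset (Fin r)) :
    ((s.sort (· ≤ ·)).map (ww M r ℓ c p)).prod = NP M r ℓ c p s := by
  have hms : (↑((s.sort (· ≤ ·)).map (ww M r ℓ c p)) : Multiset (Forms M))
      = Multiset.map (ww M r ℓ c p) s.val := by
    rw [← Multiset.map_coe, Finset.sort_eq]
  rw [NP]
  unfold Finset.noncommProd
  simp only [← hms, Multiset.noncommProd_coe]

lemma Sb_eq (a : Fin r → ℂ) (b : ℕ) :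
    Sb M r ℓ c a b p
      = ∑ s ∈ Finset.powersetCard b (Finset.univ : Finset (Fin r)),
          (∏ i ∈ s, a i) • NP M r ℓ c p s := by
  unfold Sb
  exact Finset.sum_congr rfl fun s _ => by rw [← sortProd_eq_NP]; rfl

end Main
end AomotoAux
namespace AomotoAux
section Main2
variable (M r : ℕ) (ℓ : Fin r → ((Fin M → ℂ) →ₗ[ℂ] ℂ)) (c : Fin r → ℂ) (p : Pt M)

lemma split (l : List (Fin r)) : ∃ cc : ℂ,
    (l.map (ww M r ℓ c p)).prod
      = cc • ((((l.map (fun i => (ℓ i).comp (LinearMap.fst ℂ (Fin M → ℂ) (Fin M → ℂ))))).map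
            (ι ℂ)).prod
          * ((l.map ℓ).map (fun μ => ι ℂ (Dl M μ))).prod) := by
  induction l with
  | nil => exact ⟨1, by simp⟩
  | cons i l ih =>
    obtain ⟨cc, hc⟩ := ih
    set u : Cov M := (ℓ i).comp (LinearMap.fst ℂ (Fin M → ℂ) (Fin M → ℂ)) with hu
    set v : Cov M := (ℓ i).comp (LinearMap.snd ℂ (Fin M → ℂ) (Fin M → ℂ)) with hv
    set X : Forms M :=
      (((l.map (fun i => (ℓ i).comp (LinearMap.fst ℂ (Fin M → ℂ) (Fin M → ℂ))))).map
        (ι ℂ)).prod with hX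
    set Y : Forms M := ((l.map ℓ).map (fun μ => ι ℂ (Dl M μ))).prod with hY
    refine ⟨((ℓ i p.1 + c i)⁻¹ * (ℓ i p.2 + c i)⁻¹) * ((-1) * ((-1)^l.length * cc)), ?_⟩
    simp only [List.map_cons, List.prod_cons]
    rw [hc, ww_eq]
    have hAB : ι ℂ (Avec M r ℓ c p i) * ι ℂ (Bvec M r ℓ c p i)
        = ((ℓ i p.1 + c i)⁻¹ * (ℓ i p.2 + c i)⁻¹) • (ι ℂ u * ι ℂ v) := by
      rw [Avec, Bvec, map_smul, map_smul, smul_mul_assoc, mul_smul_comm, smul_smul]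
    have hDl : Dl M (ℓ i) = u - v := rfl
    have huv : ι ℂ u * ι ℂ v = -(ι ℂ u * ι ℂ (Dl M (ℓ i))) := by
      rw [hDl, map_sub, mul_sub, ExteriorAlgebra.ι_sq_zero, zero_sub, neg_neg]
    have hmove : ι ℂ (Dl M (ℓ i)) * (X * Y)
        = ((-1:ℂ)^l.length) • (X * (ι ℂ (Dl M (ℓ i)) * Y)) := by
      rw [← mul_assoc, hX, anticomm_list, List.length_map, smul_mul_assoc, mul_assoc]
    rw [hAB, huv, smul_mul_assoc, mul_smul_comm, neg_mul, mul_assoc, hmove]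
    simp only [smul_smul, neg_smul, ← smul_neg, mul_assoc, mul_smul_comm, smul_neg, neg_neg]
    rw [← neg_smul]
    congr 1
    ring
    
lemma keyzero (l : List (Fin r)) (exl : List ((Fin M → ℂ) →ₗ[ℂ] ℂ))
    (h : M < l.length + exl.length) :
    (l.map (ww M r ℓ c p)).prod * ((exl.map (fun μ => ι ℂ (Dl M μ))).prod) = 0 := by
  obtain ⟨cc, hs⟩ := split M r ℓ c p l
  rw [hs, smul_mul_assoc, mul_assoc, ← List.prod_append, ← List.map_append, zero_of_many,
    mul_zero, smul_zero]
  rw [List.length_append, List.length_map]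
  omega

lemma keyzero2 (μ0 : (Fin M → ℂ) →ₗ[ℂ] ℂ) (l : List (Fin r))
    (exl : List ((Fin M → ℂ) →ₗ[ℂ] ℂ)) (h : M < l.length + exl.length + 1) :
    ι ℂ (Dl M μ0) * ((l.map (ww M r ℓ c p)).prod
      * ((exl.map (fun μ => ι ℂ (Dl M μ))).prod)) = 0 := by
  obtain ⟨cc, hs⟩ := split M r ℓ c p l
  rw [hs, smul_mul_assoc, mul_assoc, ← List.prod_append, ← List.map_append, mul_smul_comm,
    ← mul_assoc, anticomm_list, smul_mul_assoc, smul_smul, mul_assoc, ← List.prod_cons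
      (a := ι ℂ (Dl M μ0))]
  rw [show (ι ℂ (Dl M μ0)) :: ((l.map ℓ ++ exl).map fun μ => ι ℂ (Dl M μ))
      = ((μ0 :: (l.map ℓ ++ exl)).map fun μ => ι ℂ (Dl M μ)) from rfl]
  rw [zero_of_many, mul_zero, smul_zero]
  simp only [List.length_cons, List.length_append, List.length_map]
  omega

lemma diag0 (i : Fin r) :
    (dlog1 M r ℓ c i p - dlog2 M r ℓ c i p) * ww M r ℓ c p i = 0 := by
  rw [ww_eq, dlog1_eq, dlog2_eq, sub_mul, ← mul_assoc, ExteriorAlgebra.ι_sq_zero, zero_mul,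
    zero_sub, ← mul_assoc, swap_ii (Bvec M r ℓ c p i), neg_mul, mul_assoc,
    ExteriorAlgebra.ι_sq_zero, mul_zero, neg_zero, neg_zero]

end Main2
end AomotoAux
namespace AomotoAux
section Main3
variable (M r : ℕ) (ℓ : Fin r → ((Fin M → ℂ) →ₗ[ℂ] ℂ)) (c : Fin r → ℂ) (p : Pt M)

lemma ww_comm_ι (j : Fin r) (x : Cov M) :
    ww M r ℓ c p j * ι ℂ x = ι ℂ x * ww M r ℓ c p j := by
  rw [ww_eq]
  exact (ι_comm_even x _ _).symm

lemma ww_comm_contract (ξ : Module.Dual ℂ (Cov M)) (i j : Fin r) :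
    ww M r ℓ c p j * CliffordAlgebra.contractLeft ξ (ww M r ℓ c p i)
      = CliffordAlgebra.contractLeft ξ (ww M r ℓ c p i) * ww M r ℓ c p j := by
  rw [ww_eq M r ℓ c p i, contract_even]
  simp only [mul_sub, sub_mul, mul_smul_comm, smul_mul_assoc, ww_comm_ι]

lemma contract_NP (ξ : Module.Dual ℂ (Cov M)) (s : Finset (Fin r)) (y : Forms M) :
    CliffordAlgebra.contractLeft ξ (NP M r ℓ c p s * y)
      = (∑ i ∈ s, CliffordAlgebra.contractLeft ξ (ww M r ℓ c p i)
          * (NP M r ℓ c p (s.erase i) * y))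
        + NP M r ℓ c p s * CliffordAlgebra.contractLeft ξ y := by
  induction s using Finset.induction_on with
  | empty => simp [show NP M r ℓ c p ∅ = 1 from rfl]
  | @insert j s hj ih =>
    have hins : NP M r ℓ c p (insert j s) = ww M r ℓ c p j * NP M r ℓ c p s :=
      Finset.noncommProd_insert_of_notMem _ _ _ _ hj
    have hterm : ∀ i ∈ s,
        CliffordAlgebra.contractLeft ξ (ww M r ℓ c p i)
            * (NP M r ℓ c p ((insert j s).erase i) * y)
          = ww M r ℓ c p j * (CliffordAlgebra.contractLeft ξ (ww M r ℓ c p i)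
              * (NP M r ℓ c p (s.erase i) * y)) := by
      intro i hi
      have hij : j ≠ i := by rintro rfl; exact hj hi
      have hje : j ∉ s.erase i := fun h => hj (Finset.mem_of_mem_erase h)
      have h2 : NP M r ℓ c p ((insert j s).erase i)
          = ww M r ℓ c p j * NP M r ℓ c p (s.erase i) := by
        rw [Finset.erase_insert_of_ne hij]
        exact Finset.noncommProd_insert_of_notMem _ _ _ _ hje
      rw [h2]
      simp only [← mul_assoc]
      rw [ww_comm_contract]
    rw [hins, ww_eq, mul_assoc, Leib2, ← ww_eq, ih, Finset.sum_insert hj,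
      Finset.erase_insert hj, Finset.sum_congr rfl hterm]
    simp only [mul_add, Finset.mul_sum, mul_assoc]
    abel

end Main3
end AomotoAux
namespace AomotoAux
section Main4
variable (M r : ℕ) (ℓ : Fin r → ((Fin M → ℂ) →ₗ[ℂ] ℂ)) (c : Fin r → ℂ) (p : Pt M)
variable (F : Fin M → ((Fin M → ℂ) →ₗ[ℂ] ℂ)) (k' : ℕ) (q : Fin (k' + 1) → Fin M)

lemma Dl_apply (μ : (Fin M → ℂ) →ₗ[ℂ] ℂ) :
    Dl M μ = μ ∘ₗ LinearMap.fst ℂ (Fin M → ℂ) (Fin M → ℂ)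
      - μ ∘ₗ LinearMap.snd ℂ (Fin M → ℂ) (Fin M → ℂ) := rfl

/-- The covector underlying `dlogH` at `p`. -/
def Gv (t : Fin (k' + 1)) : Cov M := Dl M ((F (q t) p.1 - F (q t) p.2)⁻¹ • F (q t))

lemma dlogH_eq (t : Fin (k' + 1)) : dlogH M F (q t) p = ι ℂ (Gv M p F k' q t) := by
  rw [dlogH, Gv, map_smul, map_smul, Dl_apply]

lemma xi_Gv (t : Fin (k' + 1)) (h3 : F (q t) p.1 ≠ F (q t) p.2) :
    (Module.Dual.eval ℂ (Pt M) p) (Gv M p F k' q t) = 1 := by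
  have : (Module.Dual.eval ℂ (Pt M) p) (Gv M p F k' q t) = (Gv M p F k' q t) p := rfl
  rw [this, Gv, map_smul, Dl_apply]
  simp only [LinearMap.smul_apply, LinearMap.sub_apply, LinearMap.comp_apply,
    LinearMap.fst_apply, LinearMap.snd_apply, smul_eq_mul]
  exact inv_mul_cancel₀ (sub_ne_zero_of_ne h3)

lemma contract_ww_val (i : Fin r) (h1i : ℓ i p.1 + c i ≠ 0) (h2i : ℓ i p.2 + c i ≠ 0) :
    CliffordAlgebra.contractLeft (Module.Dual.eval ℂ (Pt M) p) (ww M r ℓ c p i)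
      = (dlog2 M r ℓ c i p - dlog1 M r ℓ c i p)
        + ι ℂ (Dl M ((c i * ((ℓ i p.1 + c i)⁻¹ * (ℓ i p.2 + c i)⁻¹)) • ℓ i)) := by
  set u : Cov M := (ℓ i).comp (LinearMap.fst ℂ (Fin M → ℂ) (Fin M → ℂ)) with hu
  set v : Cov M := (ℓ i).comp (LinearMap.snd ℂ (Fin M → ℂ) (Fin M → ℂ)) with hv
  rw [ww_eq, contract_even, dlog1_eq, dlog2_eq]
  have e1 : (ι ℂ (Avec M r ℓ c p i) : Forms M) = (ℓ i p.1 + c i)⁻¹ • ι ℂ u := by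
    rw [Avec, map_smul]
  have e2 : (ι ℂ (Bvec M r ℓ c p i) : Forms M) = (ℓ i p.2 + c i)⁻¹ • ι ℂ v := by
    rw [Bvec, map_smul]
  have e3 : (ι ℂ (Dl M ((c i * ((ℓ i p.1 + c i)⁻¹ * (ℓ i p.2 + c i)⁻¹)) • ℓ i)) : Forms M)
      = (c i * ((ℓ i p.1 + c i)⁻¹ * (ℓ i p.2 + c i)⁻¹)) • (ι ℂ u - ι ℂ v) := by
    rw [map_smul, map_smul]
    congr 1
    rw [Dl_apply, map_sub]
  have hξA : (Module.Dual.eval ℂ (Pt M) p) (Avec M r ℓ c p i)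
      = (ℓ i p.1 + c i)⁻¹ * ℓ i p.1 := by
    rw [Avec]; rfl
  have hξB : (Module.Dual.eval ℂ (Pt M) p) (Bvec M r ℓ c p i)
      = (ℓ i p.2 + c i)⁻¹ * ℓ i p.2 := by
    rw [Bvec]; rfl
  rw [e1, e2, e3, hξA, hξB]
  match_scalars <;> · field_simp; try ring

end Main4
end AomotoAux
namespace AomotoAux
section Main5
variable (M r : ℕ) (ℓ : Fin r → ((Fin M → ℂ) →ₗ[ℂ] ℂ)) (c : Fin r → ℂ) (p : Pt M)
variable (F : Fin M → ((Fin M → ℂ) →ₗ[ℂ] ℂ)) (k' : ℕ) (q : Fin (k' + 1) → Fin M)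

lemma per_subset (hk : k' + 1 ≤ M)
    (h1 : ∀ i, ℓ i p.1 + c i ≠ 0) (h2 : ∀ i, ℓ i p.2 + c i ≠ 0)
    (h3 : ∀ j, F (q j) p.1 ≠ F (q j) p.2)
    (s' : Finset (Fin r)) (hcard : s'.card = M - k') :
    ∑ t : Fin (k' + 1), ((-1 : ℂ) ^ (t : ℕ)) •
        (NP M r ℓ c p s'
          * (List.ofFn fun u : Fin k' => dlogH M F (q (t.succAbove u)) p).prod)
      = ∑ i ∈ s', (dlog1 M r ℓ c i p - dlog2 M r ℓ c i p)
          * (NP M r ℓ c p (s'.erase i)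
              * (List.ofFn fun t => dlogH M F (q t) p).prod) := by
  set ξ := Module.Dual.eval ℂ (Pt M) p with hξ
  set Γ : Forms M := (List.ofFn fun t : Fin (k' + 1) => dlogH M F (q t) p).prod with hΓ
  have hΓι : Γ = (List.ofFn fun t => ι ℂ (Gv M p F k' q t)).prod := by
    rw [hΓ]
    have hfun : (fun t => dlogH M F (q t) p) = fun t => ι ℂ (Gv M p F k' q t) :=
      funext fun t => dlogH_eq M p F k' q t
    rw [hfun]
  have hΓDl : Γ = ((List.ofFn fun t => ((F (q t) p.1 - F (q t) p.2)⁻¹ • F (q t))).map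
      (fun μ => ι ℂ (Dl M μ))).prod := by
    rw [hΓι, List.map_ofFn]
    rfl
  have hNl : ∀ sf : Finset (Fin r),
      NP M r ℓ c p sf = ((sf.sort (· ≤ ·)).map (ww M r ℓ c p)).prod :=
    fun sf => (sortProd_eq_NP M r ℓ c p sf).symm
  have key0 : NP M r ℓ c p s' * Γ = 0 := by
    rw [hNl s', hΓDl]
    apply keyzero
    rw [Finset.length_sort, List.length_ofFn, hcard]
    omega
  have hc0 : CliffordAlgebra.contractLeft ξ (NP M r ℓ c p s' * Γ) = 0 := by
    rw [key0, map_zero]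
  rw [contract_NP] at hc0
  have hξΓ : CliffordAlgebra.contractLeft ξ Γ
      = ∑ t : Fin (k' + 1), ((-1 : ℂ) ^ (t : ℕ)) •
          (List.ofFn fun u : Fin k' => dlogH M F (q (t.succAbove u)) p).prod := by
    rw [hΓι, contract_gamma]
    refine Finset.sum_congr rfl fun t _ => ?_
    rw [hξ, xi_Gv M p F k' q t (h3 t), mul_one]
    have hfun2 : (fun u : Fin k' => dlogH M F (q (t.succAbove u)) p)
        = fun u => ι ℂ (Gv M p F k' q (t.succAbove u)) :=
      funext fun u => dlogH_eq M p F k' q _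
    rw [hfun2]
  have hterm : ∀ i ∈ s',
      CliffordAlgebra.contractLeft ξ (ww M r ℓ c p i)
          * (NP M r ℓ c p (s'.erase i) * Γ)
        = (dlog2 M r ℓ c i p - dlog1 M r ℓ c i p)
            * (NP M r ℓ c p (s'.erase i) * Γ) := by
    intro i hi
    rw [hξ, contract_ww_val M r ℓ c p i (h1 i) (h2 i), add_mul]
    have hz : ι ℂ (Dl M ((c i * ((ℓ i p.1 + c i)⁻¹ * (ℓ i p.2 + c i)⁻¹)) • ℓ i))
        * (NP M r ℓ c p (s'.erase i) * Γ) = 0 := by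
      rw [hNl, hΓDl]
      apply keyzero2
      rw [Finset.length_sort, List.length_ofFn, Finset.card_erase_of_mem hi, hcard]
      omega
    rw [hz, add_zero]
  rw [Finset.sum_congr rfl hterm, hξΓ, Finset.mul_sum] at hc0
  have hms : ∀ t : Fin (k' + 1),
      NP M r ℓ c p s' * (((-1 : ℂ) ^ (t : ℕ)) •
        (List.ofFn fun u : Fin k' => dlogH M F (q (t.succAbove u)) p).prod)
      = ((-1 : ℂ) ^ (t : ℕ)) • (NP M r ℓ c p s'
          * (List.ofFn fun u : Fin k' => dlogH M F (q (t.succAbove u)) p).prod) :=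
    fun t => mul_smul_comm _ _ _
  rw [Finset.sum_congr rfl (fun t _ => hms t)] at hc0
  have := eq_neg_of_add_eq_zero_right hc0
  rw [this, ← Finset.sum_neg_distrib]
  refine Finset.sum_congr rfl fun i _ => ?_
  rw [← neg_mul, neg_sub]

end Main5
end AomotoAux
namespace AomotoAux
section Main6
variable (M r : ℕ) (ℓ : Fin r → ((Fin M → ℂ) →ₗ[ℂ] ℂ)) (c : Fin r → ℂ) (p : Pt M)

lemma eta_diff (a : Fin r → ℂ) :
    eta1 M r ℓ c a p - eta2 M r ℓ c a p
      = ∑ i : Fin r, a i • (dlog1 M r ℓ c i p - dlog2 M r ℓ c i p) := by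
  rw [eta1, eta2, ← Finset.sum_sub_distrib]
  exact Finset.sum_congr rfl fun i _ => (smul_sub _ _ _).symm

lemma diagNP (i : Fin r) (s : Finset (Fin r)) (hi : i ∈ s) :
    (dlog1 M r ℓ c i p - dlog2 M r ℓ c i p) * NP M r ℓ c p s = 0 := by
  have hNP : NP M r ℓ c p s = ww M r ℓ c p i * NP M r ℓ c p (s.erase i) :=
    (Finset.mul_noncommProd_erase s hi (ww M r ℓ c p)
      (fun i _ j _ _ => ww_comm M r ℓ c p i j)).symm
  rw [hNP, ← mul_assoc, diag0, zero_mul]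

lemma reindex_pair (b : ℕ) (G : Fin r → Finset (Fin r) → Forms M) :
    ∑ s ∈ Finset.powersetCard b (Finset.univ : Finset (Fin r)), ∑ i ∈ sᶜ, G i s
      = ∑ s' ∈ Finset.powersetCard (b + 1) (Finset.univ : Finset (Fin r)),
          ∑ i ∈ s', G i (s'.erase i) := by
  classical
  rw [Finset.sum_sigma' (Finset.powersetCard b Finset.univ) (fun s => sᶜ) (fun s i => G i s),
    Finset.sum_sigma' (Finset.powersetCard (b + 1) Finset.univ) (fun s' => s')
      (fun s' i => G i (s'.erase i))]
  refine Finset.sum_nbij' (i := fun x => ⟨insert x.2 x.1, x.2⟩)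
    (j := fun x => ⟨x.1.erase x.2, x.2⟩) ?_ ?_ ?_ ?_ ?_
  · rintro ⟨s, i⟩ hx
    rw [Finset.mem_sigma] at hx
    obtain ⟨hs, hi⟩ := hx
    rw [Finset.mem_compl] at hi
    rw [Finset.mem_sigma, Finset.mem_powersetCard_univ]
    exact ⟨by rw [Finset.card_insert_of_notMem hi,
      Finset.mem_powersetCard_univ.mp hs], Finset.mem_insert_self _ _⟩
  · rintro ⟨s', i⟩ hx
    rw [Finset.mem_sigma] at hx
    obtain ⟨hs, hi⟩ := hx
    rw [Finset.mem_sigma, Finset.mem_powersetCard_univ, Finset.mem_compl]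
    refine ⟨?_, Finset.notMem_erase _ _⟩
    rw [Finset.card_erase_of_mem hi, Finset.mem_powersetCard_univ.mp hs]
    omega
  · rintro ⟨s, i⟩ hx
    rw [Finset.mem_sigma] at hx
    obtain ⟨hs, hi⟩ := hx
    rw [Finset.mem_compl] at hi
    simp only [Finset.erase_insert hi]
  · rintro ⟨s', i⟩ hx
    rw [Finset.mem_sigma] at hx
    obtain ⟨hs, hi⟩ := hx
    simp only [Finset.insert_erase hi]
  · rintro ⟨s, i⟩ hx
    rw [Finset.mem_sigma] at hx
    obtain ⟨hs, hi⟩ := hx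
    rw [Finset.mem_compl] at hi
    simp only [Finset.erase_insert hi]

end Main6
end AomotoAux

open AomotoAux

/-- **Proposition `grundlegend`.** For `1 ≤ k ≤ M` and
`q₁ < … < q_k`,
`Σ_{j=1}^{k} (−1)^{j+1} S_{q₁,…,q̂_j,…,q_k} = (η^{(1)} − η^{(2)}) ∧ S_{q₁…q_k}`
on the open set where all `f_i^{(1)}`, `f_i^{(2)}` and
`F_{q_j}^{(1)} − F_{q_j}^{(2)}` are nonvanishing.
Here `k = k' + 1` so that `1 ≤ k` automatically. -/
theorem aomoto_flag_identity
    (ℓ : Fin r → ((Fin M → ℂ) →ₗ[ℂ] ℂ)) (c : Fin r → ℂ) (a : Fin r → ℂ)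
    (F : Fin M → ((Fin M → ℂ) →ₗ[ℂ] ℂ))
    (k' : ℕ) (hk : k' + 1 ≤ M)
    (q : Fin (k' + 1) → Fin M) (hq : StrictMono q)
    (p : Pt M)
    (h1 : ∀ i, ℓ i p.1 + c i ≠ 0) (h2 : ∀ i, ℓ i p.2 + c i ≠ 0)
    (h3 : ∀ j, F (q j) p.1 ≠ F (q j) p.2) :
    ∑ j : Fin (k' + 1), ((-1 : ℂ) ^ (j : ℕ)) •
        Sflag M r ℓ c a F k' (q ∘ j.succAbove) p
      = (eta1 M r ℓ c a p - eta2 M r ℓ c a p) * Sflag M r ℓ c a F (k' + 1) q p := by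
  classical
  have hb : M - k' = (M - (k' + 1)) + 1 := by omega
  -- Left-hand side
  have hLHS1 : ∀ j : Fin (k' + 1),
      Sflag M r ℓ c a F k' (q ∘ j.succAbove) p
        = ∑ s' ∈ Finset.powersetCard (M - k') (Finset.univ : Finset (Fin r)),
            (∏ i ∈ s', a i) • (NP M r ℓ c p s'
              * (List.ofFn fun u : Fin k' => dlogH M F (q (j.succAbove u)) p).prod) := by
    intro j
    rw [Sflag, Sb_eq, Finset.sum_mul]
    exact Finset.sum_congr rfl fun s' _ => smul_mul_assoc _ _ _
  have hLHS : ∑ j : Fin (k' + 1), ((-1 : ℂ) ^ (j : ℕ)) •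
        Sflag M r ℓ c a F k' (q ∘ j.succAbove) p
      = ∑ s' ∈ Finset.powersetCard (M - k') (Finset.univ : Finset (Fin r)),
          ∑ i ∈ s', (∏ i ∈ s', a i) •
            ((dlog1 M r ℓ c i p - dlog2 M r ℓ c i p)
              * (NP M r ℓ c p (s'.erase i)
                  * (List.ofFn fun t => dlogH M F (q t) p).prod)) := by
    calc ∑ j : Fin (k' + 1), ((-1 : ℂ) ^ (j : ℕ)) •
            Sflag M r ℓ c a F k' (q ∘ j.succAbove) p
        = ∑ j : Fin (k' + 1),
            ∑ s' ∈ Finset.powersetCard (M - k') (Finset.univ : Finset (Fin r)),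
              (∏ i ∈ s', a i) • (((-1 : ℂ) ^ (j : ℕ)) • (NP M r ℓ c p s'
                * (List.ofFn fun u : Fin k' => dlogH M F (q (j.succAbove u)) p).prod)) := by
          refine Finset.sum_congr rfl fun j _ => ?_
          rw [hLHS1 j, Finset.smul_sum]
          exact Finset.sum_congr rfl fun s' _ => smul_comm _ _ _
      _ = ∑ s' ∈ Finset.powersetCard (M - k') (Finset.univ : Finset (Fin r)),
            (∏ i ∈ s', a i) • ∑ j : Fin (k' + 1), ((-1 : ℂ) ^ (j : ℕ)) •
              (NP M r ℓ c p s'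
                * (List.ofFn fun u : Fin k' => dlogH M F (q (j.succAbove u)) p).prod) := by
          rw [Finset.sum_comm]
          exact Finset.sum_congr rfl fun s' _ => (Finset.smul_sum).symm
      _ = ∑ s' ∈ Finset.powersetCard (M - k') (Finset.univ : Finset (Fin r)),
            ∑ i ∈ s', (∏ i ∈ s', a i) •
              ((dlog1 M r ℓ c i p - dlog2 M r ℓ c i p)
                * (NP M r ℓ c p (s'.erase i)
                    * (List.ofFn fun t => dlogH M F (q t) p).prod)) := by
          refine Finset.sum_congr rfl fun s' hs' => ?_
          rw [per_subset M r ℓ c p F k' q hk h1 h2 h3 s'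
            (Finset.mem_powersetCard_univ.mp hs'), Finset.smul_sum]
  -- Right-hand side
  have hRHS : (eta1 M r ℓ c a p - eta2 M r ℓ c a p) * Sflag M r ℓ c a F (k' + 1) q p
      = ∑ s ∈ Finset.powersetCard (M - (k' + 1)) (Finset.univ : Finset (Fin r)),
          ∑ i : Fin r, (a i * ∏ i ∈ s, a i) •
            ((dlog1 M r ℓ c i p - dlog2 M r ℓ c i p)
              * (NP M r ℓ c p s * (List.ofFn fun t => dlogH M F (q t) p).prod)) := by
    rw [Sflag, Sb_eq, eta_diff]
    have h1' : (∑ s ∈ Finset.powersetCard (M - (k' + 1)) (Finset.univ : Finset (Fin r)),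
          (∏ i ∈ s, a i) • NP M r ℓ c p s) * (List.ofFn fun t => dlogH M F (q t) p).prod
        = ∑ s ∈ Finset.powersetCard (M - (k' + 1)) (Finset.univ : Finset (Fin r)),
            (∏ i ∈ s, a i) • (NP M r ℓ c p s
              * (List.ofFn fun t => dlogH M F (q t) p).prod) := by
      rw [Finset.sum_mul]
      exact Finset.sum_congr rfl fun s _ => smul_mul_assoc _ _ _
    rw [h1', Finset.sum_mul, Finset.sum_comm]
    refine Finset.sum_congr rfl fun s _ => ?_
    rw [Finset.mul_sum]
    refine Finset.sum_congr rfl fun i _ => ?_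
    rw [smul_mul_assoc, mul_smul_comm, smul_smul]
  rw [hLHS, hRHS]
  -- kill diagonal terms and reindex
  have hkill : ∀ s ∈ Finset.powersetCard (M - (k' + 1)) (Finset.univ : Finset (Fin r)),
      ∑ i : Fin r, (a i * ∏ i ∈ s, a i) •
          ((dlog1 M r ℓ c i p - dlog2 M r ℓ c i p)
            * (NP M r ℓ c p s * (List.ofFn fun t => dlogH M F (q t) p).prod))
        = ∑ i ∈ sᶜ, (a i * ∏ i ∈ s, a i) •
            ((dlog1 M r ℓ c i p - dlog2 M r ℓ c i p)
              * (NP M r ℓ c p s * (List.ofFn fun t => dlogH M F (q t) p).prod)) := by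
    intro s _
    symm
    apply Finset.sum_subset (Finset.subset_univ _)
    intro i _ hnot
    have his : i ∈ s := by
      rw [Finset.mem_compl, not_not] at hnot
      exact hnot
    rw [← mul_assoc, diagNP M r ℓ c p i s his, zero_mul, smul_zero]
  rw [Finset.sum_congr rfl hkill,
    reindex_pair M r (M - (k' + 1)) (fun i s => (a i * ∏ i ∈ s, a i) •
      ((dlog1 M r ℓ c i p - dlog2 M r ℓ c i p)
        * (NP M r ℓ c p s * (List.ofFn fun t => dlogH M F (q t) p).prod))),
    ← hb]
  refine Finset.sum_congr rfl fun s' _ => Finset.sum_congr rfl fun i hi => ?_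
  rw [Finset.mul_prod_erase s' a hi]
end
end

section
/- Let a₁ ∈ ℂ be not a nonpositive integer, and let η = Σ_{i=1}^n a_i dlog z_i act on germs at 0 of logarithmic differential forms on the polydisc Δⁿ with poles along the coordinate hyperplanes. Define the operator δ on a monomial form z^m dlog z_{i₁} ∧ … ∧ dlog z_{i_k} (with i₁ < … < i_k) by δ(α) = (m₁ + a₁)⁻¹ z^m · ι(α) where ι is contraction with the vector field z₁ ∂/∂z₁ (so ι kills the form unless i₁ = 1, in which case it deletes dlog z₁). Then for every such monomial form α one has (d+η)δα + δ(d+η)α = α. -/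
set_option synthInstance.maxHeartbeats 1000000
set_option maxHeartbeats 1000000

noncomputable section

open ExteriorAlgebra

/-- The exterior algebra on the span of the logarithmic generators
`dlog z₀, …, dlog z_n` (modelled on the coordinate vectors of `ℂ^{n+1}`). -/
abbrev LogExt (n : ℕ) := ExteriorAlgebra ℂ (Fin (n + 1) → ℂ)

/-- Logarithmic forms on the polydisc (algebraic model): finite combinations
`Σ_m z^m ω_m` with `ω_m` in the exterior algebra on the `dlog z_i`. -/
abbrev LogForms (n : ℕ) := (Fin (n + 1) → ℕ) →₀ LogExt n

/-- The generator `dlog z_i`. -/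
def dlogz (n : ℕ) (i : Fin (n + 1)) : LogExt n := ι ℂ (Pi.single i 1)

/-- Exterior derivative: `d(z^m ω) = Σ_i m_i z^m dlog z_i ∧ ω` for `ω` a product
of `dlog`'s (which are closed). -/
def dExt (n : ℕ) (α : LogForms n) : LogForms n :=
  α.sum fun m ω => Finsupp.single m (∑ i, (m i : ℂ) • (dlogz n i * ω))

/-- Multiplication by `η = Σ_i a_i dlog z_i`. -/
def etaMul (n : ℕ) (a : Fin (n + 1) → ℂ) (α : LogForms n) : LogForms n :=
  α.sum fun m ω => Finsupp.single m (∑ i, a i • (dlogz n i * ω))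

/-- The homotopy operator `δ`: on `z^m ω` it is `(m₁ + a₁)⁻¹ z^m ι_θ(ω)`, where
`ι_θ` is contraction with the vector field `z₁ ∂/∂z₁`, i.e. the interior product
with the coordinate functional dual to `dlog z₁` (index `0` here). -/
def deltaOp (n : ℕ) (a : Fin (n + 1) → ℂ) (α : LogForms n) : LogForms n :=
  α.sum fun m ω => Finsupp.single m
    (((m 0 : ℂ) + a 0)⁻¹ •
      (CliffordAlgebra.contractLeft
        (LinearMap.proj 0 : (Fin (n + 1) → ℂ) →ₗ[ℂ] ℂ) ω))

/-!
All three operators act on one monomial `z^m` at a time, and on the coefficient of `z^m` the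
operator `d + η` is left multiplication by the one-form `Σ_i (m_i + a_i) dlog z_i`. Contraction
with `z₁ ∂/∂z₁` is an antiderivation, so it anticommutes with that multiplication up to the
pairing of the one-form with `z₁ ∂/∂z₁`, namely `m₁ + a₁`; this is invertible because `a₁` is not a
nonpositive integer, and `δ` divides by exactly that factor.
-/

namespace LogForms

variable {n : ℕ}

theorem dExt_single (m : Fin (n + 1) → ℕ) (x : LogExt n) :
    dExt n (Finsupp.single m x) = Finsupp.single m (∑ i, (m i : ℂ) • (dlogz n i * x)) := by
  simp [dExt]

theorem etaMul_single (a : Fin (n + 1) → ℂ) (m : Fin (n + 1) → ℕ) (x : LogExt n) :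
    etaMul n a (Finsupp.single m x) = Finsupp.single m (∑ i, a i • (dlogz n i * x)) := by
  simp [etaMul]

theorem deltaOp_single (a : Fin (n + 1) → ℂ) (m : Fin (n + 1) → ℕ) (x : LogExt n) :
    deltaOp n a (Finsupp.single m x) = Finsupp.single m (((m 0 : ℂ) + a 0)⁻¹ •
      CliffordAlgebra.contractLeft (LinearMap.proj 0 : (Fin (n + 1) → ℂ) →ₗ[ℂ] ℂ) x) := by
  simp [deltaOp]

theorem dExt_add_etaMul_single (a : Fin (n + 1) → ℂ) (m : Fin (n + 1) → ℕ) (x : LogExt n) :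
    dExt n (Finsupp.single m x) + etaMul n a (Finsupp.single m x)
      = Finsupp.single m (∑ i, ((m i : ℂ) + a i) • (dlogz n i * x)) := by
  simp only [dExt_single, etaMul_single, ← Finsupp.single_add, ← Finset.sum_add_distrib,
    add_smul]

theorem contractLeft_dlogz_mul (i : Fin (n + 1)) (x : LogExt n) :
    CliffordAlgebra.contractLeft (LinearMap.proj 0 : (Fin (n + 1) → ℂ) →ₗ[ℂ] ℂ) (dlogz n i * x)
      = (if i = 0 then (1 : ℂ) else 0) • x
        - dlogz n i * CliffordAlgebra.contractLeft (LinearMap.proj 0) x := by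
  rw [dlogz, ExteriorAlgebra.ι, CliffordAlgebra.contractLeft_ι_mul]
  simp [Pi.single_apply, eq_comm]

/-- Cartan's formula for contraction with `z₁ ∂/∂z₁` against the one-form `Σ_i w_i dlog z_i`. -/
theorem sum_smul_dlogz_mul_contractLeft (w : Fin (n + 1) → ℂ) (x : LogExt n) :
    ∑ i, w i • (dlogz n i * CliffordAlgebra.contractLeft
        (LinearMap.proj 0 : (Fin (n + 1) → ℂ) →ₗ[ℂ] ℂ) x)
      + CliffordAlgebra.contractLeft (LinearMap.proj 0) (∑ i, w i • (dlogz n i * x))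
      = w 0 • x := by
  rw [map_sum, ← Finset.sum_add_distrib]
  simp only [map_smul, contractLeft_dlogz_mul, ← smul_add, add_sub_cancel, ite_smul, one_smul,
    zero_smul, smul_ite, smul_zero, Finset.sum_ite_eq', Finset.mem_univ, if_true]

theorem homotopy_formula_single (a : Fin (n + 1) → ℂ) (m : Fin (n + 1) → ℕ)
    (hm : (m 0 : ℂ) + a 0 ≠ 0) (x : LogExt n) :
    (dExt n (deltaOp n a (Finsupp.single m x)) + etaMul n a (deltaOp n a (Finsupp.single m x)))
      + deltaOp n a (dExt n (Finsupp.single m x) + etaMul n a (Finsupp.single m x))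
      = Finsupp.single m x := by
  rw [deltaOp_single, dExt_add_etaMul_single, dExt_add_etaMul_single, deltaOp_single,
    ← Finsupp.single_add]
  congr 1
  calc _ = ((m 0 : ℂ) + a 0)⁻¹ • (∑ i, ((m i : ℂ) + a i) • (dlogz n i *
          CliffordAlgebra.contractLeft (LinearMap.proj 0) x)
        + CliffordAlgebra.contractLeft (LinearMap.proj 0)
          (∑ i, ((m i : ℂ) + a i) • (dlogz n i * x))) := by
        rw [smul_add, Finset.smul_sum]
        congr 1
        exact Finset.sum_congr rfl fun i _ => by rw [mul_smul_comm, smul_comm]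
    _ = x := by
        rw [sum_smul_dlogz_mul_contractLeft, smul_smul, inv_mul_cancel₀ hm, one_smul]

end LogForms

theorem homotopy_formula_general (n : ℕ) (a : Fin (n + 1) → ℂ)
    (ha : ∀ k : ℕ, a 0 ≠ -(k : ℂ))
    (m : Fin (n + 1) → ℕ) (k : ℕ) (I : Fin k → Fin (n + 1))
    (α : LogForms n)
    (hα : α = Finsupp.single m ((List.ofFn fun s => dlogz n (I s)).prod)) :
    (dExt n (deltaOp n a α) + etaMul n a (deltaOp n a α))
      + deltaOp n a (dExt n α + etaMul n a α) = α := by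
  subst hα
  refine LogForms.homotopy_formula_single a m (fun h => ha (m 0) ?_) _
  linear_combination h

/-- **Lemma `beanT`, homotopy formula.** If `a₁` is not a nonpositive
integer, then for every monomial logarithmic form
`α = z^m dlog z_{i₁} ∧ … ∧ dlog z_{i_k}` (with `i₁ < … < i_k`) one has
`(d+η)δα + δ(d+η)α = α`. -/
theorem homotopy_formula (n : ℕ) (a : Fin (n + 1) → ℂ)
    (ha : ∀ k : ℕ, a 0 ≠ -(k : ℂ))
    (m : Fin (n + 1) → ℕ) (k : ℕ) (I : Fin k → Fin (n + 1)) (hI : StrictMono I)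
    (α : LogForms n)
    (hα : α = Finsupp.single m ((List.ofFn fun s => dlogz n (I s)).prod)) :
    (dExt n (deltaOp n a α) + etaMul n a (deltaOp n a α))
      + deltaOp n a (dExt n α + etaMul n a α) = α :=
  homotopy_formula_general n a ha m k I α hα
end
end

section
/- With the Casimir matrices Ω_{jk} of the sl₂ example and κ = 3, the multivalued section Φ̃(z⃗) = Π_{1≤i<j≤4}(z_i−z_j)^{−1/6} · ((z₁−z₃)(z₂−z₄)·[v] + (z₁−z₂)(z₃−z₄)·[w]) is flat for the KZ connection, i.e., for each j ∈ {1,2,3,4}: (∂/∂z_j + (1/3) Σ_{k≠j} Ω_{jk}/(z_j−z_k)) Φ̃(z⃗) = 0 on the configuration space of 4 distinct points in ℂ. -/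
noncomputable section

/-- The Casimir matrices `Ω_{jk}` of the sl₂ example, acting on coordinates in the
basis `[v], [w]` of the coinvariants:
`Ω_{1,2} = Ω_{3,4} = [[1/2, −1],[0, −3/2]]`,
`Ω_{1,3} = Ω_{2,4} = [[−3/2, 0],[−1, 1/2]]`,
`Ω_{1,4} = Ω_{2,3} = [[−1/2, 1],[1, −1/2]]` (indices here start at `0`). -/
def casMat (j k : Fin 4) : Matrix (Fin 2) (Fin 2) ℂ :=
  if (j = 0 ∧ k = 1) ∨ (j = 1 ∧ k = 0) ∨ (j = 2 ∧ k = 3) ∨ (j = 3 ∧ k = 2) then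
    !![1/2, -1; 0, -3/2]
  else if (j = 0 ∧ k = 2) ∨ (j = 2 ∧ k = 0) ∨ (j = 1 ∧ k = 3) ∨ (j = 3 ∧ k = 1) then
    !![-3/2, 0; -1, 1/2]
  else !![-1/2, 1; 1, -1/2]

/-- `Φ(z⃗) = ((z₁−z₃)(z₂−z₄), (z₁−z₂)(z₃−z₄))` in coordinates w.r.t. `[v], [w]`. -/
def PhiVec (z : Fin 4 → ℂ) : Fin 2 → ℂ :=
  ![(z 0 - z 2) * (z 1 - z 3), (z 0 - z 1) * (z 2 - z 3)]

def pr (i : Fin 4) : (Fin 4 → ℂ) →L[ℂ] ℂ := ContinuousLinearMap.proj i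

lemma phi_hasFDeriv (z : Fin 4 → ℂ) :
    HasFDerivAt PhiVec
      (ContinuousLinearMap.pi
        (![(z 0 - z 2) • (pr 1 - pr 3) + (z 1 - z 3) • (pr 0 - pr 2),
          (z 0 - z 1) • (pr 2 - pr 3) + (z 2 - z 3) • (pr 0 - pr 1)] :
          Fin 2 → ((Fin 4 → ℂ) →L[ℂ] ℂ))) z := by
  have hp : ∀ i : Fin 4, HasFDerivAt (fun z : Fin 4 → ℂ => z i) (pr i) z :=
    fun i => (pr i).hasFDerivAt
  apply hasFDerivAt_pi''
  intro i
  fin_cases i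
  · have h := (((hp 0).sub (hp 2)).mul
      ((hp 1).sub (hp 3)))
    convert h using 2 <;> rfl
  · have h := (((hp 0).sub (hp 1)).mul
      ((hp 2).sub (hp 3)))
    convert h using 2 <;> rfl


set_option maxHeartbeats 2000000 in
/-- With `κ = 3`, the multivalued section
`Φ̃(z⃗) = Π_{i<j}(z_i−z_j)^{−1/6}·Φ(z⃗)` is flat for the KZ connection
`∇_{∂/∂z_j} = ∂/∂z_j + (1/3)Σ_{k≠j} Ω_{jk}/(z_j−z_k)`.  Removing the multivalued
prefactor, this is the logarithmic-derivative identity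
`∂_j Φ + (1/3)Σ_{k≠j} Ω_{jk}Φ/(z_j−z_k) = (1/6)(Σ_{k≠j} 1/(z_j−z_k))·Φ`
on the configuration space of 4 distinct points in `ℂ`. -/
theorem kz_flat_section (z : Fin 4 → ℂ)
    (hz : ∀ i j : Fin 4, i ≠ j → z i ≠ z j) (j : Fin 4) :
    fderiv ℂ PhiVec z (Pi.single j 1)
      + (1/3 : ℂ) • ∑ k ∈ Finset.univ.erase j,
          (z j - z k)⁻¹ • (casMat j k).mulVec (PhiVec z)
      = ((1/6 : ℂ) * ∑ k ∈ Finset.univ.erase j, (z j - z k)⁻¹) • PhiVec z := by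
  have hne : ∀ a b : Fin 4, a ≠ b → z a - z b ≠ 0 := fun a b h => sub_ne_zero.mpr (hz a b h)
  have h01 : (z 0 - z 1) * (z 0 - z 1)⁻¹ = 1 := mul_inv_cancel₀ (hne 0 1 (by decide))
  have h02 : (z 0 - z 2) * (z 0 - z 2)⁻¹ = 1 := mul_inv_cancel₀ (hne 0 2 (by decide))
  have h03 : (z 0 - z 3) * (z 0 - z 3)⁻¹ = 1 := mul_inv_cancel₀ (hne 0 3 (by decide))
  have h10 : (z 1 - z 0) * (z 1 - z 0)⁻¹ = 1 := mul_inv_cancel₀ (hne 1 0 (by decide))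
  have h12 : (z 1 - z 2) * (z 1 - z 2)⁻¹ = 1 := mul_inv_cancel₀ (hne 1 2 (by decide))
  have h13 : (z 1 - z 3) * (z 1 - z 3)⁻¹ = 1 := mul_inv_cancel₀ (hne 1 3 (by decide))
  have h20 : (z 2 - z 0) * (z 2 - z 0)⁻¹ = 1 := mul_inv_cancel₀ (hne 2 0 (by decide))
  have h21 : (z 2 - z 1) * (z 2 - z 1)⁻¹ = 1 := mul_inv_cancel₀ (hne 2 1 (by decide))
  have h23 : (z 2 - z 3) * (z 2 - z 3)⁻¹ = 1 := mul_inv_cancel₀ (hne 2 3 (by decide))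
  have h30 : (z 3 - z 0) * (z 3 - z 0)⁻¹ = 1 := mul_inv_cancel₀ (hne 3 0 (by decide))
  have h31 : (z 3 - z 1) * (z 3 - z 1)⁻¹ = 1 := mul_inv_cancel₀ (hne 3 1 (by decide))
  have h32 : (z 3 - z 2) * (z 3 - z 2)⁻¹ = 1 := mul_inv_cancel₀ (hne 3 2 (by decide))
  rw [(phi_hasFDeriv z).fderiv]
  funext i
  fin_cases j <;> fin_cases i
  · simp only [Finset.sum_erase_eq_sub (Finset.mem_univ _), Fin.sum_univ_four]
    simp [casMat, PhiVec, Matrix.mulVec, dotProduct, pr, Fin.sum_univ_two,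
      Pi.single_apply, ContinuousLinearMap.pi_apply]
    linear_combination ((z 3 - z 2)/3) * h01 + (2*(z 3 - z 1)/3) * h02 + ((z 2 - z 1)/3) * h03
  · simp only [Finset.sum_erase_eq_sub (Finset.mem_univ _), Fin.sum_univ_four]
    simp [casMat, PhiVec, Matrix.mulVec, dotProduct, pr, Fin.sum_univ_two,
      Pi.single_apply, ContinuousLinearMap.pi_apply]
    linear_combination (2*(z 3 - z 2)/3) * h01 + ((z 3 - z 1)/3) * h02 + ((z 1 - z 2)/3) * h03
  · simp only [Finset.sum_erase_eq_sub (Finset.mem_univ _), Fin.sum_univ_four]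
    simp [casMat, PhiVec, Matrix.mulVec, dotProduct, pr, Fin.sum_univ_two,
      Pi.single_apply, ContinuousLinearMap.pi_apply]
    linear_combination ((z 2 - z 3)/3) * h10 + ((z 3 - z 0)/3) * h12 + (2*(z 2 - z 0)/3) * h13
  · simp only [Finset.sum_erase_eq_sub (Finset.mem_univ _), Fin.sum_univ_four]
    simp [casMat, PhiVec, Matrix.mulVec, dotProduct, pr, Fin.sum_univ_two,
      Pi.single_apply, ContinuousLinearMap.pi_apply]
    linear_combination (2*(z 2 - z 3)/3) * h10 + ((z 0 - z 3)/3) * h12 + ((z 2 - z 0)/3) * h13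
  · simp only [Finset.sum_erase_eq_sub (Finset.mem_univ _), Fin.sum_univ_four]
    simp [casMat, PhiVec, Matrix.mulVec, dotProduct, pr, Fin.sum_univ_two,
      Pi.single_apply, ContinuousLinearMap.pi_apply]
    linear_combination (2*(z 1 - z 3)/3) * h20 + ((z 0 - z 3)/3) * h21 + ((z 1 - z 0)/3) * h23
  · simp only [Finset.sum_erase_eq_sub (Finset.mem_univ _), Fin.sum_univ_four]
    simp [casMat, PhiVec, Matrix.mulVec, dotProduct, pr, Fin.sum_univ_two,
      Pi.single_apply, ContinuousLinearMap.pi_apply]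
    linear_combination ((z 1 - z 3)/3) * h20 + ((z 3 - z 0)/3) * h21 + (2*(z 1 - z 0)/3) * h23
  · simp only [Finset.sum_erase_eq_sub (Finset.mem_univ _), Fin.sum_univ_four]
    simp [casMat, PhiVec, Matrix.mulVec, dotProduct, pr, Fin.sum_univ_two,
      Pi.single_apply, ContinuousLinearMap.pi_apply]
    linear_combination ((z 1 - z 2)/3) * h30 + (2*(z 0 - z 2)/3) * h31 + ((z 0 - z 1)/3) * h32
  · simp only [Finset.sum_erase_eq_sub (Finset.mem_univ _), Fin.sum_univ_four]
    simp [casMat, PhiVec, Matrix.mulVec, dotProduct, pr, Fin.sum_univ_two,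
      Pi.single_apply, ContinuousLinearMap.pi_apply]
    linear_combination ((z 2 - z 1)/3) * h30 + ((z 0 - z 2)/3) * h31 + (2*(z 0 - z 1)/3) * h32
end
end

section
/- With κ = 3 in the sl₂ example, the section ṽ(z⃗) = f(z⃗)·[v], where f(z⃗) = (z₁−z₂)^{−1/2}(z₁−z₃)^{1/2}(z₁−z₄)^{1/2}(z₂−z₃)^{1/2}(z₂−z₄)^{1/2}(z₃−z₄)^{−1/2}, is flat for the KZ connection on the quotient line bundle of dual conformal blocks; equivalently, ∇_{∂/∂z_j} ([v]·f) is proportional to Φ(z⃗) for every j, i.e., ∂_j f·[v] + (f/3) Σ_{k≠j} Ω_{jk}[v]/(z_j−z_k) lies in the line spanned by (z₁−z₃)(z₂−z₄)[v] + (z₁−z₂)(z₃−z₄)[w]. -/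
noncomputable section

/-- The exponents of the multivalued prefactor
`f(z⃗) = (z₁−z₂)^{−1/2}(z₁−z₃)^{1/2}(z₁−z₄)^{1/2}(z₂−z₃)^{1/2}(z₂−z₄)^{1/2}(z₃−z₄)^{−1/2}`:
`cexp j k` is the exponent of `(z_j − z_k)` (symmetric in `j,k`). -/
def cexp (j k : Fin 4) : ℂ :=
  if (j = 0 ∧ k = 1) ∨ (j = 1 ∧ k = 0) ∨ (j = 2 ∧ k = 3) ∨ (j = 3 ∧ k = 2) then
    -(1/2) else 1/2

/-- The logarithmic derivative `∂_j f / f = Σ_{k≠j} cexp j k/(z_j − z_k)` of the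
multivalued function `f`. -/
def logDf (j : Fin 4) (z : Fin 4 → ℂ) : ℂ :=
  ∑ k ∈ Finset.univ.erase j, cexp j k / (z j - z k)

/-- The coordinate vector of `[v]`. -/
def evec : Fin 2 → ℂ := ![1, 0]

/-!
Dividing by the branch value `f`, the claim is that
`∂_j log f · [v] + (1/3) Σ_{k≠j} Ω_{jk}[v]/(z_j − z_k)` is a multiple of `Φ`. Summand by
summand, `cexp j k · [v] + Ω_{jk}[v]/3` equals `−[v]/3`, `−[w]/3` or `([v] + [w])/3` according
as `{j, k}` is of the type `{1,2}`, `{1,3}` or `{1,4}`, and the three resulting partial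
fractions add up to `−Φ(z⃗) / (3 ∏_{k≠j} (z_j − z_k))`.
-/

open Finset

theorem logDf_smul_evec_add_casMat_sum_eq_smul_PhiVec (z : Fin 4 → ℂ)
    (hz : ∀ i j : Fin 4, i ≠ j → z i ≠ z j) (j : Fin 4) :
    logDf j z • evec + (1 / 3 : ℂ) • ∑ k ∈ univ.erase j, (z j - z k)⁻¹ • (casMat j k).mulVec evec
      = -(3 * ∏ k ∈ univ.erase j, (z j - z k))⁻¹ • PhiVec z := by
  ext i
  fin_cases j <;> fin_cases i <;>
    simp [logDf, cexp, casMat, PhiVec, evec,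
      show univ.erase (0 : Fin 4) = {1, 2, 3} by decide,
      show univ.erase (1 : Fin 4) = {0, 2, 3} by decide,
      show univ.erase (2 : Fin 4) = {0, 1, 3} by decide,
      show univ.erase (3 : Fin 4) = {0, 1, 2} by decide] <;>
    field_simp [sub_ne_zero, hz] <;> ring

/-- With `κ = 3`, the section `ṽ = f·[v]` is flat for the KZ
connection on the quotient line bundle of dual conformal blocks: for every branch
value `fz` of `f` at `z⃗` (whose `z_j`-derivative is then `logDf j z · fz`),
`∂_j f·[v] + (f/3) Σ_{k≠j} Ω_{jk}[v]/(z_j−z_k)` lies in the line spanned by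
`Φ(z⃗) = (z₁−z₃)(z₂−z₄)[v] + (z₁−z₂)(z₃−z₄)[w]`. -/
theorem kz_flat_on_quotient (z : Fin 4 → ℂ)
    (hz : ∀ i j : Fin 4, i ≠ j → z i ≠ z j) (j : Fin 4)
    (fz dfz : ℂ) (hdf : dfz = logDf j z * fz) :
    dfz • evec
      + (fz / 3) • ∑ k ∈ Finset.univ.erase j,
          (z j - z k)⁻¹ • (casMat j k).mulVec evec
      ∈ Submodule.span ℂ {PhiVec z} := by
  have hfactor : dfz • evec + (fz / 3) • ∑ k ∈ univ.erase j, (z j - z k)⁻¹ • (casMat j k).mulVec evec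
      = fz • (logDf j z • evec
        + (1 / 3 : ℂ) • ∑ k ∈ univ.erase j, (z j - z k)⁻¹ • (casMat j k).mulVec evec) := by
    subst hdf
    module
  rw [hfactor, logDf_smul_evec_add_casMat_sum_eq_smul_PhiVec z hz j, smul_smul]
  exact Submodule.smul_mem _ _ (Submodule.mem_span_singleton_self _)
end
end

section
/- Let S^M be the pairing on top-degree flags of an arrangement of hyperplanes H₁,…,H_r in ℂ^M with weights a(H_i), defined on flags F, F' (complete flags L⁰ ⊃ L¹ ⊃ … ⊃ L^M of edges of the arrangement) by S^M(F,F') = (1/M!) Σ_{H̄} (−1)^{σ_{H̄}(F)σ_{H̄}(F')} a(H₁)⋯a(H_M), summed over M-tuples H̄ = (H₁,…,H_M) of hyperplanes adjacent to both F and F'. Then under the Schechtman–Varchenko duality between flags and logarithmic forms, S^M coincides with the pairing induced by the Shapovalov form S = Σ_{1≤i₁<…<i_M≤r} Π_s a_{i_s} dlog f_{i_s}^{(1)} ∧ dlog f_{i_s}^{(2)}: for any two general-position M-tuples of hyperplanes determining flags F(H_{σ(1)},…,H_{σ(M)}), the coefficient of the flag pair (F,F') in S equals S^M(F,F'). -/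
open scoped Classical

noncomputable section

/-- The (possibly zero) sign `σ_{H̄}(F)` with which the ordered tuple `H̄` of
hyperplanes is adjacent to the flag `F`: the sum over all permutations `σ` with
`F = F(H_{σ(1)},…,H_{σ(M)})` of `sign σ`.  (By the general-position uniqueness
hypothesis below there is at most one such `σ`.) -/
def flagSign {M r : ℕ} {Flag : Type*} (mkFlag : (Fin M → Fin r) → Flag)
    (H : Fin M → Fin r) (F : Flag) : ℂ :=
  ∑ σ : Equiv.Perm (Fin M),
    if mkFlag (H ∘ σ) = F then ((Equiv.Perm.sign σ : ℤ) : ℂ) else 0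

lemma flagSign_comp {M r : ℕ} {Flag : Type*} (mkFlag : (Fin M → Fin r) → Flag)
    (H : Fin M → Fin r) (F : Flag) (σ : Equiv.Perm (Fin M)) :
    flagSign mkFlag (H ∘ σ) F = ((Equiv.Perm.sign σ : ℤ) : ℂ) * flagSign mkFlag H F := by
  unfold flagSign
  rw [Finset.mul_sum]
  refine Fintype.sum_equiv (Equiv.mulLeft σ) _ _ ?_
  intro τ
  have hc : H ∘ ⇑(σ * τ) = (H ∘ ⇑σ) ∘ ⇑τ := by
    ext x; simp [Equiv.Perm.coe_mul, Function.comp]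
  simp only [Equiv.coe_mulLeft, hc, Equiv.Perm.sign_mul]
  split_ifs with h
  · push_cast
    have hsq : ((Equiv.Perm.sign σ : ℤ) : ℂ) * ((Equiv.Perm.sign σ : ℤ) : ℂ) = 1 := by
      have h2 : ((Equiv.Perm.sign σ : ℤ) : ℂ) * ((Equiv.Perm.sign σ : ℤ) : ℂ)
          = (((Equiv.Perm.sign σ * Equiv.Perm.sign σ : ℤˣ) : ℤ) : ℂ) := by push_cast; ring
      rw [h2, Int.units_mul_self]; norm_num
    rw [← mul_assoc, hsq, one_mul]
  · ring

/-- The Schechtman–Varchenko quasi-classical contravariant form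
`S^M(F,F') = (1/M!) Σ_{H̄ adjacent to F and F'} (−1)^{σ_{H̄}(F)σ_{H̄}(F')} a(H₁)⋯a(H_M)`
(sum over ordered `M`-tuples of hyperplanes in general position adjacent to both
flags) coincides, under the Schechtman–Varchenko duality between flags and
logarithmic forms, with the pairing induced by the Shapovalov form
`S = Σ_{i₁<…<i_M} Π_s a_{i_s} dlog f^{(1)}_{i_s} ∧ dlog f^{(2)}_{i_s}`: the
coefficient of the flag pair `(F,F')` in `S` — the corresponding sum over
*increasing* tuples — equals `S^M(F,F')`.

Here the geometry is abstracted: `GP` is the (permutation-closed) set of ordered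
`M`-tuples of hyperplane indices in general position, `mkFlag H̄` is the flag
`(H₁ ⊃ H₁∩H₂ ⊃ …)`, tuples in `GP` consist of distinct hyperplanes, and a flag in
general position determines the ordering (`huniq`). -/
theorem shapovalov_eq_flag_pairing
    (M r : ℕ) (a : Fin r → ℂ) (Flag : Type*)
    (GP : Set (Fin M → Fin r))
    (mkFlag : (Fin M → Fin r) → Flag)
    (hperm : ∀ H ∈ GP, ∀ σ : Equiv.Perm (Fin M), (H ∘ σ) ∈ GP)
    (hinj : ∀ H ∈ GP, Function.Injective H)
    (huniq : ∀ H ∈ GP, ∀ σ σ' : Equiv.Perm (Fin M),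
        mkFlag (H ∘ σ) = mkFlag (H ∘ σ') → σ = σ')
    (F F' : Flag) :
    ((M.factorial : ℂ))⁻¹ *
        ∑ H : Fin M → Fin r,
          (if H ∈ GP then
            flagSign mkFlag H F * flagSign mkFlag H F' * ∏ s, a (H s)
          else 0)
      = ∑ H : Fin M → Fin r,
          (if H ∈ GP ∧ StrictMono H then
            flagSign mkFlag H F * flagSign mkFlag H F' * ∏ s, a (H s)
          else 0) := by
  set T : (Fin M → Fin r) → ℂ := fun H =>
    flagSign mkFlag H F * flagSign mkFlag H F' * ∏ s, a (H s) with hT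
  -- invariance of T under permutation
  have hTinv : ∀ (H : Fin M → Fin r) (σ : Equiv.Perm (Fin M)), T (H ∘ σ) = T H := by
    intro H σ
    have hsq : ((Equiv.Perm.sign σ : ℤ) : ℂ) * ((Equiv.Perm.sign σ : ℤ) : ℂ) = 1 := by
      have : ((Equiv.Perm.sign σ : ℤ) : ℂ) * ((Equiv.Perm.sign σ : ℤ) : ℂ)
          = (((Equiv.Perm.sign σ * Equiv.Perm.sign σ : ℤˣ) : ℤ) : ℂ) := by push_cast; ring
      rw [this, Int.units_mul_self]; norm_num
    have hprod : (∏ s, a ((H ∘ σ) s)) = ∏ s, a (H s) :=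
      Equiv.prod_comp σ (fun i => a (H i))
    simp only [hT, flagSign_comp, hprod]
    calc ((Equiv.Perm.sign σ : ℤ) : ℂ) * flagSign mkFlag H F *
          (((Equiv.Perm.sign σ : ℤ) : ℂ) * flagSign mkFlag H F') * ∏ s, a (H s)
        = (((Equiv.Perm.sign σ : ℤ) : ℂ) * ((Equiv.Perm.sign σ : ℤ) : ℂ)) *
          (flagSign mkFlag H F * flagSign mkFlag H F' * ∏ s, a (H s)) := by ring
      _ = _ := by rw [hsq, one_mul]
  -- unique sorting permutation
  have hexu : ∀ H ∈ GP, ∃! σ : Equiv.Perm (Fin M), StrictMono (H ∘ σ) := by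
    intro H hH
    refine ⟨Tuple.sort H, ?_, ?_⟩
    · exact (Tuple.monotone_sort H).strictMono_of_injective
        ((hinj H hH).comp (Tuple.sort H).injective)
    · intro σ' hσ'
      have hσ : StrictMono (H ∘ ⇑(Tuple.sort H)) :=
        (Tuple.monotone_sort H).strictMono_of_injective
          ((hinj H hH).comp (Tuple.sort H).injective)
      have hrange : Set.range (H ∘ ⇑σ') = Set.range (H ∘ ⇑(Tuple.sort H)) := by
        rw [Set.range_comp, Set.range_comp, σ'.surjective.range_eq,
          (Tuple.sort H).surjective.range_eq]
      have heq : H ∘ ⇑σ' = H ∘ ⇑(Tuple.sort H) :=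
        (hσ'.range_inj hσ).mp hrange
      exact Equiv.ext fun x => hinj H hH (congrFun heq x)
  -- per-H expansion
  have hstep : ∀ H : Fin M → Fin r,
      (if H ∈ GP then T H else 0)
        = ∑ σ : Equiv.Perm (Fin M),
            (if (H ∘ σ) ∈ GP ∧ StrictMono (H ∘ σ) then T (H ∘ σ) else 0) := by
    intro H
    by_cases hH : H ∈ GP
    · obtain ⟨σ₀, hσ₀, huniq'⟩ := hexu H hH
      rw [if_pos hH]
      rw [Finset.sum_eq_single σ₀]
      · rw [if_pos ⟨hperm H hH σ₀, hσ₀⟩, hTinv]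
      · intro σ _ hne
        rw [if_neg]
        rintro ⟨-, hsm⟩
        exact hne (huniq' σ hsm)
      · intro h; exact absurd (Finset.mem_univ σ₀) h
    · rw [if_neg hH]
      symm
      refine Finset.sum_eq_zero fun σ _ => ?_
      rw [if_neg]
      rintro ⟨hG, -⟩
      have h2 := hperm _ hG σ⁻¹
      have h3 : (H ∘ ⇑σ) ∘ ⇑σ⁻¹ = H := by ext x; simp
      exact hH (h3 ▸ h2)
  calc ((M.factorial : ℂ))⁻¹ * ∑ H : Fin M → Fin r, (if H ∈ GP then T H else 0)
      = ((M.factorial : ℂ))⁻¹ * ∑ H : Fin M → Fin r, ∑ σ : Equiv.Perm (Fin M),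
          (if (H ∘ σ) ∈ GP ∧ StrictMono (H ∘ σ) then T (H ∘ σ) else 0) := by
        rw [Finset.sum_congr rfl fun H _ => hstep H]
    _ = ((M.factorial : ℂ))⁻¹ * ∑ σ : Equiv.Perm (Fin M), ∑ H : Fin M → Fin r,
          (if (H ∘ σ) ∈ GP ∧ StrictMono (H ∘ σ) then T (H ∘ σ) else 0) := by
        rw [Finset.sum_comm]
    _ = ((M.factorial : ℂ))⁻¹ * ∑ σ : Equiv.Perm (Fin M), ∑ K : Fin M → Fin r,
          (if K ∈ GP ∧ StrictMono K then T K else 0) := by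
        congr 1
        refine Finset.sum_congr rfl fun σ _ => ?_
        exact Fintype.sum_equiv (Equiv.arrowCongr σ.symm (Equiv.refl (Fin r)))
          _ _ (fun K => by simp [Equiv.arrowCongr, Function.comp])
    _ = ((M.factorial : ℂ))⁻¹ * ((M.factorial : ℂ) * ∑ K : Fin M → Fin r,
          (if K ∈ GP ∧ StrictMono K then T K else 0)) := by
        rw [Finset.sum_const, Finset.card_univ, Fintype.card_perm, Fintype.card_fin,
          nsmul_eq_mul]
    _ = _ := by
        rw [← mul_assoc, inv_mul_cancel₀ (by exact_mod_cast Nat.factorial_ne_zero M), one_mul]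
end
end
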